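/- arXiv:1104.2242 — 7 statements merged into one kernel-verified Lean document; each statement's English description precedes it below -/
import Mathlib

section
/- Let n ≥ 3 be an integer and m = (n−2)/(n+2). Suppose either ρ = 0 and β > 0 with γ = 2β/(1−m), or ρ = −1 and β > 1/2 with γ = (2β−1)/(1−m) (so that γ > 0 in both cases). If u is a positive smooth radially symmetric solution of ((n−1)/m)·Δ(u^m) + β·(x·∇u) + γ·u = 0 on ℝⁿ, then the scalar curvature R = −(4(n−1)/(n−2))·u^{−1}·Δ(u^m) satisfies R(x) > 0 for every x ∈ ℝⁿ. -/
/-!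
Along a ray `s ↦ s • v` the Laplacian of a radial function is `w'' + (n - 1) / s * w'`, so the
soliton equation becomes an ODE for the profile `f s = u (s • v)`. The soliton potential
`ψ s = β s f'(s) + γ f(s)`, which is `β ⟪x, ∇u⟫ + γ u` at `x = s • v`, is positive at `s = 0`.
At a zero `t > 0` of `ψ` the equation forces `Δ(u^m) = 0`, and eliminating `f'` and `f''` gives
`ψ'(t) = γ f(t) ((n - 2) β - m γ) / (β t) > 0`, so `ψ` can never reach zero from above. The
equation then rewrites the scalar curvature as `R = 4 m / (n - 2) · (β ⟪x, ∇u⟫ + γ u) / u > 0`.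
-/

open Real MeasureTheory Metric
open scoped Topology RealInnerProductSpace

noncomputable section

/-- Euclidean space ℝⁿ. -/
abbrev Euc (n : ℕ) := EuclideanSpace ℝ (Fin n)

/-- Euclidean Laplacian: sum of pure second derivatives in the coordinate directions. -/
def lap {n : ℕ} (f : Euc n → ℝ) (x : Euc n) : ℝ :=
  ∑ i : Fin n, fderiv ℝ (fun y => fderiv ℝ f y (EuclideanSpace.single i 1)) x
    (EuclideanSpace.single i 1)

/-- The conformally flat Yamabe soliton equation
`((n-1)/m)·Δ(u^m) + β·(x·∇u) + γ·u = 0` on ℝⁿ. -/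
def YamabePDE {n : ℕ} (m β γ : ℝ) (u : Euc n → ℝ) : Prop :=
  ∀ x : Euc n, ((n : ℝ) - 1) / m * lap (fun y => u y ^ m) x
      + β * ⟪x, gradient u x⟫ + γ * u x = 0

/-- A function on ℝⁿ is radially symmetric if it depends only on the norm. -/
def IsRadial {n : ℕ} (u : Euc n → ℝ) : Prop :=
  ∀ x y : Euc n, ‖x‖ = ‖y‖ → u x = u y

/-- Scalar curvature of the conformally flat metric g = u^{4/(n+2)}·dx²:
`R = -(4(n-1)/(n-2))·u⁻¹·Δ(u^m)`. -/
def scalarCurv {n : ℕ} (m : ℝ) (u : Euc n → ℝ) (x : Euc n) : ℝ :=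
  -(4 * ((n : ℝ) - 1) / ((n : ℝ) - 2)) * lap (fun y => u y ^ m) x / u x

open InnerProductSpace Laplacian Module

section RadialCalculus

variable {E : Type*} [NormedAddCommGroup E] [InnerProductSpace ℝ E]

theorem hasDerivAt_apply_smul_const {F : Type*} [NormedAddCommGroup F] [NormedSpace ℝ F]
    {h : E → F} {v : E} {t : ℝ} (hh : DifferentiableAt ℝ h (t • v)) :
    HasDerivAt (fun s : ℝ => h (s • v)) (fderiv ℝ h (t • v) v) t := by
  simpa [Function.comp_def] using
    hh.hasFDerivAt.comp_hasDerivAt t ((hasDerivAt_id t).smul_const v)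

/-- Differentiate `θ ↦ Dh(c θ)(c' θ) = 0` at `θ = 0` along the circle
`c θ = cos θ • p + sin θ • w`, on which `h` is constant. -/
theorem fderiv_fderiv_apply_of_radial {h : E → ℝ} (hh : ContDiff ℝ 2 h)
    (hrad : ∀ x y, ‖x‖ = ‖y‖ → h x = h y) {p w : E} (hpw : ⟪p, w⟫ = 0) (hwp : ‖w‖ = ‖p‖) :
    fderiv ℝ (fderiv ℝ h) p w w = fderiv ℝ h p p := by
  set c : ℝ → E := fun θ => Real.cos θ • p + Real.sin θ • w
  set c' : ℝ → E := fun θ => -Real.sin θ • p + Real.cos θ • w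
  have hc : ∀ θ, HasDerivAt c (c' θ) θ := fun θ =>
    ((Real.hasDerivAt_cos θ).smul_const p).add ((Real.hasDerivAt_sin θ).smul_const w)
  have hc' : HasDerivAt c' (-p) 0 :=
    (((Real.hasDerivAt_sin 0).neg.smul_const p).add
      ((Real.hasDerivAt_cos 0).smul_const w)).congr_deriv (by simp)
  have hnorm : ∀ θ, ‖c θ‖ = ‖p‖ := fun θ => by
    rw [← sq_eq_sq₀ (norm_nonneg _) (norm_nonneg _), norm_add_sq_real, inner_smul_left,
      inner_smul_right, hpw, norm_smul, norm_smul, hwp]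
    simp only [Real.norm_eq_abs, mul_pow, sq_abs]
    linear_combination ‖p‖ ^ 2 * Real.cos_sq_add_sin_sq θ
  have hD1 : Differentiable ℝ h := hh.differentiable (by norm_num)
  have hD2 : Differentiable ℝ (fderiv ℝ h) :=
    (hh.fderiv_right (m := 1) (by norm_num)).differentiable (by norm_num)
  have htangent : ∀ θ, fderiv ℝ h (c θ) (c' θ) = 0 := fun θ => by
    have hconst : HasDerivAt (fun θ => h (c θ)) 0 θ := by
      simpa [funext fun θ => hrad _ _ (hnorm θ)] using hasDerivAt_const θ (h p)
    exact ((hD1 _).hasFDerivAt.comp_hasDerivAt θ (hc θ)).unique hconst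
  have hder : HasDerivAt (fun θ => fderiv ℝ h (c θ) (c' θ))
      (fderiv ℝ (fderiv ℝ h) p w w + fderiv ℝ h p (-p)) 0 := by
    simpa [c, c'] using ((hD2 _).hasFDerivAt.comp_hasDerivAt 0 (hc 0)).clm_apply hc'
  have hzero := (funext htangent ▸ hder).unique (hasDerivAt_const 0 (0 : ℝ))
  simpa [add_neg_eq_zero] using hzero

theorem inner_smul_gradient_smul [CompleteSpace E] {u : E → ℝ} {v : E} {s : ℝ}
    (hu : DifferentiableAt ℝ u (s • v)) :
    ⟪s • v, gradient u (s • v)⟫ = s * deriv (fun r => u (r • v)) s := by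
  rw [inner_gradient_right, (hasDerivAt_apply_smul_const hu).deriv]
  simp

theorem laplacian_smul_of_radial [FiniteDimensional ℝ E] {h : E → ℝ} (hh : ContDiff ℝ 2 h)
    (hrad : ∀ x y, ‖x‖ = ‖y‖ → h x = h y) {v : E} (hv : ‖v‖ = 1) {t : ℝ} (ht : t ≠ 0) :
    Δ h (t • v) = deriv (deriv fun s => h (s • v)) t
      + (finrank ℝ E - 1) / t * deriv (fun s => h (s • v)) t := by
  classical
  have hD1 : Differentiable ℝ h := hh.differentiable (by norm_num)
  have hD2 : Differentiable ℝ (fderiv ℝ h) :=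
    (hh.fderiv_right (m := 1) (by norm_num)).differentiable (by norm_num)
  set D2 := fderiv ℝ (fderiv ℝ h) (t • v)
  have hderiv : deriv (fun s => h (s • v)) = fun s => fderiv ℝ h (s • v) v :=
    funext fun s => (hasDerivAt_apply_smul_const (hD1 _)).deriv
  have hderiv2 : deriv (fun s => fderiv ℝ h (s • v) v) t = D2 v v :=
    ((hasDerivAt_apply_smul_const (hD2 _)).clm_apply (hasDerivAt_const t v)).deriv.trans
      (by simp [D2])
  have hsingleton : Orthonormal ℝ ((↑) : ({v} : Set E) → E) :=
    orthonormal_subsingleton_iff.2 fun x => by rw [Set.mem_singleton_iff.1 x.2]; exact hv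
  obtain ⟨u, b, hsub, hb⟩ := hsingleton.exists_orthonormalBasis_extension
  have hvu : v ∈ u := hsub rfl
  have hoff : ∀ i ∈ ({⟨v, hvu⟩}ᶜ : Finset u), D2 i i = fderiv ℝ h (t • v) v / t := by
    intro i hi
    have hiv : ⟪(v : E), i⟫ = 0 := by
      simpa [hb] using b.orthonormal.2 (Ne.symm (by simpa using hi) : ⟨v, hvu⟩ ≠ i)
    have hi1 : ‖(i : E)‖ = 1 := by simpa [hb] using b.orthonormal.1 i
    have := fderiv_fderiv_apply_of_radial hh hrad (p := t • v) (w := t • (i : E))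
      (by simp [inner_smul_left, inner_smul_right, hiv]) (by simp [norm_smul, hv, hi1])
    simp only [map_smul, FunLike.coe_smul, Pi.smul_apply, smul_eq_mul] at this
    rw [eq_div_iff ht]
    exact mul_left_cancel₀ ht (by linear_combination this)
  have hcard : Fintype.card u = finrank ℝ E := (finrank_eq_card_basis b.toBasis).symm
  rw [laplacian_eq_iteratedFDeriv_orthonormalBasis h b]
  simp only [iteratedFDeriv_two_apply, hb, Matrix.cons_val_zero, Matrix.cons_val_one]
  rw [Fintype.sum_eq_add_sum_compl ⟨v, hvu⟩, Finset.sum_congr rfl hoff, Finset.sum_const,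
    Finset.card_compl, nsmul_eq_mul, hderiv, hderiv2]
  have hpos : 1 ≤ Fintype.card u := Fintype.card_pos_iff.2 ⟨⟨v, hvu⟩⟩
  rw [Finset.card_singleton, Nat.cast_sub hpos, hcard]
  simp only [D2]
  ring

end RadialCalculus

theorem lap_eq_laplacian {n : ℕ} {f : Euc n → ℝ} {x : Euc n}
    (hf : DifferentiableAt ℝ (fderiv ℝ f) x) : lap f x = Δ f x := by
  rw [laplacian_eq_iteratedFDeriv_orthonormalBasis f (EuclideanSpace.basisFun (Fin n) ℝ)]
  simp [lap, iteratedFDeriv_two_apply, fderiv_clm_apply hf (differentiableAt_const _)]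

theorem deriv_deriv_rpow_const {f : ℝ → ℝ} {m : ℝ} (hf : ContDiff ℝ 2 f) (hpos : ∀ s, 0 < f s)
    (t : ℝ) :
    deriv (deriv fun s => f s ^ m) t
      = m * f t ^ (m - 2) * (f t * deriv (deriv f) t + (m - 1) * deriv f t ^ 2) := by
  have hd := hf.differentiable (by norm_num)
  have h1 : deriv (fun s => f s ^ m) = fun s => deriv f s * m * f s ^ (m - 1) :=
    funext fun s => deriv_rpow_const (hd s) (Or.inl (hpos s).ne')
  have h2 : HasDerivAt (fun s => deriv f s * m * f s ^ (m - 1)) (deriv (deriv f) t * m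
      * f t ^ (m - 1) + deriv f t * m * (deriv f t * (m - 1) * f t ^ (m - 1 - 1))) t :=
    ((hf.differentiable_deriv_two t).hasDerivAt.mul_const m).mul
      ((hd t).hasDerivAt.rpow_const (Or.inl (hpos t).ne'))
  rw [h1, h2.deriv]
  rw [show m - 1 - 1 = m - 2 by ring, show m - 1 = m - 2 + 1 by ring,
    Real.rpow_add_one (hpos t).ne']
  ring

theorem pos_of_deriv_pos_at_zeros {ψ : ℝ → ℝ} (hψ : Continuous ψ) (h0 : 0 < ψ 0)
    (hzero : ∀ t > 0, ψ t = 0 → 0 < deriv ψ t) {t : ℝ} (ht : 0 ≤ t) : 0 < ψ t := by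
  have hsign : ∀ t, 0 ≤ t → ψ t = 0 →
      ∀ᶠ s in 𝓝 t, SignType.sign (ψ s) = SignType.sign (s - t) :=
    fun t ht hψt => eventually_nhdsWithin_sign_eq_of_deriv_pos
      (hzero t (ht.lt_of_ne (by rintro rfl; linarith)) hψt) hψt
  have hnonneg : ∀ T, Set.Icc 0 T ⊆ {s | 0 ≤ ψ s} := fun T =>
    IsClosed.Icc_subset_of_forall_mem_nhdsWithin ((isClosed_le continuous_const hψ).inter
      isClosed_Icc) h0.le fun x ⟨(hx : 0 ≤ ψ x), hxI⟩ => by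
      rcases hx.lt_or_eq with hlt | heq
      · exact nhdsWithin_le_nhds ((continuousAt_const.eventually_lt hψ.continuousAt hlt).mono
          fun _ => le_of_lt)
      · filter_upwards [nhdsWithin_le_nhds (hsign x hxI.1 heq.symm), self_mem_nhdsWithin]
          with s hs (hxs : x < s)
        rw [sign_pos (sub_pos.2 hxs), sign_eq_one_iff] at hs
        exact hs.le
  rcases (show 0 ≤ ψ t from hnonneg t ⟨ht, le_rfl⟩).lt_or_eq with hlt | heq
  · exact hlt
  have htpos : 0 < t := ht.lt_of_ne (by rintro rfl; linarith)
  obtain ⟨s, hs, hst⟩ :=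
    (((hsign t ht heq.symm).filter_mono nhdsWithin_le_nhds).and (Ioo_mem_nhdsLT htpos)).exists
  rw [sign_neg (sub_neg.2 hst.2), sign_eq_neg_one_iff] at hs
  exact absurd (hnonneg t ⟨hst.1.le, hst.2.le⟩) (not_le.2 hs)

/-- Eliminating `F''` and then `F'` gives
`(β (F' + t F'') + γ F') · β t F = γ F² ((N - 2) β - m γ)`. -/
theorem soliton_slope_pos_of_eq_zero {N m β γ t F F' F'' : ℝ} (hβ : 0 < β) (hγ : 0 < γ)
    (hmγ : m * γ < (N - 2) * β) (ht : 0 < t) (hF : 0 < F)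
    (hode : t * F * F'' + (m - 1) * t * F' ^ 2 + (N - 1) * F * F' = 0)
    (hzero : β * (t * F') + γ * F = 0) : 0 < β * (F' + t * F'') + γ * F' := by
  have hprod : (β * (F' + t * F'') + γ * F') * (β * t * F)
      = F ^ 2 * γ * ((N - 2) * β - m * γ) := by
    linear_combination β ^ 2 * t * hode
      + (β * t * (1 - m) * F' + (m * γ - (N - 2) * β) * F) * hzero
  refine pos_of_mul_pos_left ?_ (by positivity : 0 ≤ β * t * F)
  rw [hprod]
  have : 0 < (N - 2) * β - m * γ := by linarith
  positivity

theorem pos_of_radial_soliton_ode {f : ℝ → ℝ} {N m β γ : ℝ} (hf : ContDiff ℝ 2 f)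
    (hpos : ∀ s, 0 < f s) (hN : N ≠ 1) (hm : m ≠ 0) (hβ : 0 < β) (hγ : 0 < γ)
    (hmγ : m * γ < (N - 2) * β)
    (hode : ∀ s > 0, (N - 1) / m * (deriv (deriv fun r => f r ^ m) s
      + (N - 1) / s * deriv (fun r => f r ^ m) s) + β * (s * deriv f s) + γ * f s = 0)
    {s : ℝ} (hs : 0 ≤ s) : 0 < β * (s * deriv f s) + γ * f s := by
  have hd := hf.differentiable (by norm_num)
  have hcont : Continuous (deriv f) := hf.continuous_deriv (by norm_num)
  refine pos_of_deriv_pos_at_zeros (ψ := fun s => β * (s * deriv f s) + γ * f s)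
    (by fun_prop) (by simpa using mul_pos hγ (hpos 0))
    (fun t ht hzero => ?_) hs
  have hψ : HasDerivAt (fun s => β * (s * deriv f s) + γ * f s)
      (β * (1 * deriv f t + t * deriv (deriv f) t) + γ * deriv f t) t :=
    (((hasDerivAt_id t).mul (hf.differentiable_deriv_two t).hasDerivAt).const_mul β).add
      ((hd t).hasDerivAt.const_mul γ)
  rw [hψ.deriv, one_mul]
  refine soliton_slope_pos_of_eq_zero hβ hγ hmγ ht (hpos t) ?_ hzero
  have hlap :
      deriv (deriv fun r => f r ^ m) t + (N - 1) / t * deriv (fun r => f r ^ m) t = 0 := by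
    have := hode t ht
    rw [add_assoc, hzero, add_zero] at this
    exact (mul_eq_zero.1 this).resolve_left (div_ne_zero (sub_ne_zero.2 hN) hm)
  rw [deriv_deriv_rpow_const hf hpos, deriv_rpow_const (hd t) (Or.inl (hpos t).ne'),
    show m - 1 = m - 2 + 1 by ring, Real.rpow_add_one (hpos t).ne'] at hlap
  refine (mul_eq_zero.1 ?_).resolve_left
    (mul_ne_zero hm (Real.rpow_pos_of_pos (hpos t) (m - 2)).ne')
  linear_combination (norm := skip) t * hlap
  field_simp
  ring

section Soliton

variable {n : ℕ} {m β γ : ℝ} {u : Euc n → ℝ}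

theorem YamabePDE.ode_along_ray (hpde : YamabePDE m β γ u) (hu : ContDiff ℝ 2 u)
    (hpos : ∀ x, 0 < u x) (hrad : IsRadial u) {v : Euc n} (hv : ‖v‖ = 1) {s : ℝ} (hs : s ≠ 0) :
    ((n : ℝ) - 1) / m * (deriv (deriv fun r => u (r • v) ^ m) s
      + ((n : ℝ) - 1) / s * deriv (fun r => u (r • v) ^ m) s)
      + β * (s * deriv (fun r => u (r • v)) s) + γ * u (s • v) = 0 := by
  have hum : ContDiff ℝ 2 fun y => u y ^ m := hu.rpow_const_of_ne fun x => (hpos x).ne'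
  have hlap := laplacian_smul_of_radial hum (fun x y hxy => by simp only [hrad x y hxy]) hv hs
  rw [finrank_euclideanSpace_fin, ← lap_eq_laplacian
    ((hum.fderiv_right (m := 1) (by norm_num)).differentiable (by norm_num) _)] at hlap
  rw [← hlap, ← inner_smul_gradient_smul (hu.differentiable (by norm_num) _)]
  exact hpde (s • v)

theorem YamabePDE.soliton_potential_pos (hpde : YamabePDE m β γ u) (hu : ContDiff ℝ 2 u)
    (hpos : ∀ x, 0 < u x) (hrad : IsRadial u) (hn : n ≠ 1) (hm : m ≠ 0) (hβ : 0 < β)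
    (hγ : 0 < γ) (hmγ : m * γ < (n - 2) * β) (x : Euc n) :
    0 < β * ⟪x, gradient u x⟫ + γ * u x := by
  rcases eq_or_ne x 0 with rfl | hx
  · simpa using mul_pos hγ (hpos 0)
  set v := ‖x‖⁻¹ • x
  have hv : ‖v‖ = 1 := norm_smul_inv_norm hx
  have hxv : x = ‖x‖ • v := by simp [v, smul_smul, hx]
  rw [hxv, inner_smul_gradient_smul (hu.differentiable (by norm_num) _)]
  exact pos_of_radial_soliton_ode (f := fun r => u (r • v))
    (hu.comp (contDiff_id.smul contDiff_const)) (fun _ => hpos _)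
    (by exact_mod_cast hn) hm hβ hγ hmγ
    (fun s hs => hpde.ode_along_ray hu hpos hrad hv hs.ne') (norm_nonneg x)

theorem YamabePDE.scalarCurv_eq (hpde : YamabePDE m β γ u) (hn : n ≠ 1) (hm : m ≠ 0)
    (x : Euc n) :
    scalarCurv m u x = 4 * m / ((n : ℝ) - 2) * (β * ⟪x, gradient u x⟫ + γ * u x) / u x := by
  have hn' : (n : ℝ) - 1 ≠ 0 := sub_ne_zero.2 (by exact_mod_cast hn)
  have hlap : lap (fun y => u y ^ m) x
      = -m / ((n : ℝ) - 1) * (β * ⟪x, gradient u x⟫ + γ * u x) := by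
    have h := hpde x
    field_simp at h ⊢
    linear_combination h
  rw [scalarCurv, hlap]
  field_simp

end Soliton

theorem steady_expander_params {n : ℕ} (hn : 3 ≤ n) {m ρ β γ : ℝ}
    (hm : m = ((n : ℝ) - 2) / ((n : ℝ) + 2))
    (hcase : (ρ = 0 ∧ 0 < β ∧ γ = 2 * β / (1 - m)) ∨
             (ρ = -1 ∧ 1 / 2 < β ∧ γ = (2 * β - 1) / (1 - m))) :
    0 < m ∧ 0 < β ∧ 0 < γ ∧ m * γ < (n - 2) * β := by
  have hn3 : (3 : ℝ) ≤ n := by exact_mod_cast hn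
  have h1m : 1 - m = 4 / ((n : ℝ) + 2) := by rw [hm]; field_simp; ring
  have hm0 : 0 < m := by rw [hm]; apply div_pos <;> linarith
  rw [h1m] at hcase
  rcases hcase with ⟨-, hβ, hγ⟩ | ⟨-, hβ, hγ⟩
  · have hmγ : m * γ = ((n : ℝ) - 2) * β / 2 := by rw [hγ, hm]; field_simp; ring
    have : 0 < ((n : ℝ) - 2) * β := mul_pos (by linarith) hβ
    exact ⟨hm0, hβ, by rw [hγ]; positivity, by linarith⟩
  · have hmγ : m * γ = ((n : ℝ) - 2) * (2 * β - 1) / 4 := by rw [hγ, hm]; field_simp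
    have : 0 < ((n : ℝ) - 2) * (2 * β + 1) := mul_pos (by linarith) (by linarith)
    exact ⟨hm0, by linarith, by rw [hγ]; exact div_pos (by linarith) (by positivity),
      by linarith⟩

/-- steady solitons (β > 0) and expanders with γ > 0 have R > 0. -/
theorem steady_expander_scalar_curv_pos (n : ℕ) (hn : 3 ≤ n)
    (m ρ β γ : ℝ)
    (hm : m = ((n : ℝ) - 2) / ((n : ℝ) + 2))
    (hcase : (ρ = 0 ∧ 0 < β ∧ γ = 2 * β / (1 - m)) ∨
             (ρ = -1 ∧ 1 / 2 < β ∧ γ = (2 * β - 1) / (1 - m)))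
    (u : Euc n → ℝ)
    (hpos : ∀ x, 0 < u x) (hsmooth : ContDiff ℝ (⊤ : ℕ∞) u)
    (hrad : IsRadial u) (hpde : YamabePDE m β γ u) :
    ∀ x : Euc n, 0 < scalarCurv m u x := by
  obtain ⟨hm0, hβ, hγ, hmγ⟩ := steady_expander_params hn hm hcase
  have hn1 : n ≠ 1 := by omega
  have hn2 : (0 : ℝ) < n - 2 := by
    have : (3 : ℝ) ≤ n := by exact_mod_cast hn
    linarith
  have hu : ContDiff ℝ 2 u := hsmooth.of_le (by norm_cast)
  intro x
  rw [hpde.scalarCurv_eq hn1 hm0.ne' x]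
  have hS := hpde.soliton_potential_pos hu hpos hrad hn1 hm0.ne' hβ hγ hmγ x
  exact div_pos (mul_pos (div_pos (by positivity) hn2) hS) (hpos x)
end
end

section
/- Let n ≥ 3 be an integer, m = (n−2)/(n+2), 0 < β < 1/2, and γ = (2β−1)/(1−m) (so γ < 0; this is the expander case ρ = −1). If u is a positive smooth radially symmetric solution of ((n−1)/m)·Δ(u^m) + β·(x·∇u) + γ·u = 0 on ℝⁿ, then the scalar curvature R = −(4(n−1)/(n−2))·u^{−1}·Δ(u^m) satisfies R(x) < 0 for every x ∈ ℝⁿ. -/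
/-!
Write `u x = φ ‖x‖` and `g r = β r φ'(r) + γ φ(r)` (`radialLowerOrder`). The equation reads
`((n-1)/m) Δ(u^m)(x) = -g ‖x‖`, so `R < 0` everywhere amounts to `g < 0` on `[0, ∞)`.
Now `g 0 = γ φ(0) < 0`, and `g` can only cross zero downwards: at a zero `r > 0`, the equation
on the axis gives `w'' + (n-1) w'/r = 0` for `w = φ^m`, while `β r φ' = -γ φ > 0`; eliminating
`φ''` yields `g'(r) = φ'(r) (m γ - (n-2) β) = -φ'(r) (n-2)(2β+1)/4 < 0`.
-/

open Real MeasureTheory Metric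
open scoped Topology RealInnerProductSpace

noncomputable section

lemma deriv_nonneg_of_le_on_left {g : ℝ → ℝ} {a b : ℝ} (hab : a < b)
    (hle : ∀ r ∈ Set.Ioo a b, g r ≤ g b) : 0 ≤ deriv g b := by
  by_cases hd : DifferentiableAt ℝ g b
  swap
  · rw [deriv_zero_of_not_differentiableAt hd]
  have hslope : Filter.Tendsto (slope g b) (𝓝[<] b) (𝓝 (deriv g b)) :=
    (hasDerivAt_iff_tendsto_slope.mp hd.hasDerivAt).mono_left
      (nhdsWithin_mono _ fun r hr => ne_of_lt hr)
  refine ge_of_tendsto hslope ?_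
  filter_upwards [Ioo_mem_nhdsLT hab] with r hr
  rw [slope_def_field]
  exact div_nonneg_of_nonpos (sub_nonpos.mpr (hle r hr)) (sub_nonpos.mpr hr.2.le)

lemma neg_of_deriv_neg_at_zeros {g : ℝ → ℝ} (hg : Continuous g) (h0 : g 0 < 0)
    (hcross : ∀ r, 0 < r → g r = 0 → deriv g r < 0) {b : ℝ} (hb : 0 ≤ b) : g b < 0 := by
  by_contra! hgb
  set S := Set.Icc 0 b ∩ {r | 0 ≤ g r}
  have hSbdd : BddBelow S := ⟨0, fun r hr => hr.1.1⟩
  set r₀ := sInf S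
  have hr₀S : r₀ ∈ S :=
    (isClosed_Icc.inter (isClosed_le continuous_const hg)).csInf_mem ⟨b, ⟨hb, le_rfl⟩, hgb⟩ hSbdd
  have hr₀pos : 0 < r₀ :=
    lt_of_le_of_ne hr₀S.1.1 fun h => (show 0 ≤ g 0 from h ▸ hr₀S.2).not_gt h0
  have hbefore : ∀ r ∈ Set.Ioo 0 r₀, g r < 0 := fun r hr => by
    by_contra! hgr
    exact (csInf_le hSbdd ⟨⟨hr.1.le, hr.2.le.trans hr₀S.1.2⟩, hgr⟩).not_gt hr.2
  have hr₀zero : g r₀ = 0 := by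
    refine le_antisymm (le_of_tendsto
      (hg.continuousAt.mono_left (nhdsWithin_le_nhds (s := Set.Iio r₀))) ?_) hr₀S.2
    filter_upwards [Ioo_mem_nhdsLT hr₀pos] with r hr
    exact (hbefore r hr).le
  exact (hcross r₀ hr₀pos hr₀zero).not_ge
    (deriv_nonneg_of_le_on_left hr₀pos fun r hr => hr₀zero ▸ (hbefore r hr).le)

lemma deriv_deriv_comp_sqrt_sq_add_sq {ψ : ℝ → ℝ} (hψ : Differentiable ℝ ψ) {r : ℝ}
    (hψ' : DifferentiableAt ℝ (deriv ψ) r) (hr : 0 < r) :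
    deriv (deriv fun s => ψ √(r ^ 2 + s ^ 2)) 0 = deriv ψ r / r := by
  set ρ : ℝ → ℝ := fun s => √(r ^ 2 + s ^ 2) with hρ
  have hρ0 : ρ 0 = r := by simp [hρ, Real.sqrt_sq hr.le]
  have hρpos : ∀ s, 0 < ρ s := fun s => Real.sqrt_pos.mpr (by positivity)
  have hdρ : ∀ s, HasDerivAt ρ (s / ρ s) s := fun s => by
    have hsq : HasDerivAt (fun t : ℝ => r ^ 2 + t ^ 2) (2 * s) s := by
      simpa using (hasDerivAt_pow 2 s).const_add (r ^ 2)
    convert (hsq.sqrt (by positivity)) using 1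
    field_simp [(hρpos s).ne']
    rfl
  have hderiv : deriv (fun s => ψ (ρ s)) = fun s => deriv ψ (ρ s) * (s / ρ s) :=
    funext fun s => ((hψ _).hasDerivAt.comp s (hdρ s)).deriv
  have hfirst : HasDerivAt (fun s => deriv ψ (ρ s)) (deriv (deriv ψ) r * (0 / ρ 0)) 0 :=
    hψ'.hasDerivAt.comp_of_eq 0 (hdρ 0) hρ0.symm
  have hsecond : HasDerivAt (fun s => s / ρ s) ((1 * ρ 0 - 0 * (0 / ρ 0)) / ρ 0 ^ 2) 0 :=
    (hasDerivAt_id 0).div (hdρ 0) (hρpos 0).ne'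
  rw [hderiv, HasDerivAt.deriv (f := fun s => deriv ψ (ρ s) * (s / ρ s)) (hfirst.mul hsecond), hρ0]
  field_simp
  ring

lemma slope_neg_of_radial_ode {n m β γ p q z r : ℝ} (hp : 0 < p) (hr : 0 < r) (hβ : 0 < β)
    (hγ : γ < 0) (hmγ : m * γ < (n - 2) * β)
    (hode : z + (m - 1) * q ^ 2 / p + (n - 1) * q / r = 0) (hzero : β * (r * q) + γ * p = 0) :
    β * (q + r * z) + γ * q < 0 := by
  have hq : 0 < q := by nlinarith [mul_pos hβ hr]
  have hslope : β * (q + r * z) + γ * q = q * (m * γ - (n - 2) * β) := by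
    field_simp at hode
    refine mul_left_cancel₀ hp.ne' ?_
    linear_combination β * hode - (m - 1) * q * hzero
  rw [hslope]
  exact mul_neg_of_pos_of_neg hq (by linarith)

lemma deriv_rpow_const_of_pos {φ : ℝ → ℝ} (hφ : Differentiable ℝ φ) (hpos : ∀ r, 0 < φ r)
    (m : ℝ) : deriv (fun t => φ t ^ m) = fun t => m * φ t ^ (m - 1) * deriv φ t :=
  funext fun t => by rw [deriv_rpow_const (hφ t) (Or.inl (hpos t).ne')]; ring

lemma deriv_deriv_rpow_const_of_pos {φ : ℝ → ℝ} (hφ : Differentiable ℝ φ)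
    {r : ℝ} (hφ' : DifferentiableAt ℝ (deriv φ) r) (hpos : ∀ r, 0 < φ r) (m : ℝ) :
    deriv (deriv fun t => φ t ^ m) r
      = m * φ r ^ (m - 1) * (deriv (deriv φ) r + (m - 1) * deriv φ r ^ 2 / φ r) := by
  have hpow : HasDerivAt (fun t => φ t ^ (m - 1))
      (deriv φ r * (m - 1) * φ r ^ (m - 1 - 1)) r :=
    (hφ r).hasDerivAt.rpow_const (Or.inl (hpos r).ne')
  rw [deriv_rpow_const_of_pos hφ hpos,
    HasDerivAt.deriv (f := fun t => m * φ t ^ (m - 1) * deriv φ t)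
      ((hpow.const_mul m).mul hφ'.hasDerivAt),
    Real.rpow_sub_one (hpos r).ne' (m - 1)]
  field_simp [(hpos r).ne']
  ring

lemma expander_parameters {n m β γ : ℝ} (hn : 2 < n) (hm : m = (n - 2) / (n + 2))
    (hβ : 0 < β) (hβ' : β < 1 / 2) (hγ : γ = (2 * β - 1) / (1 - m)) :
    0 < m ∧ γ < 0 ∧ m * γ < (n - 2) * β := by
  have hm0 : 0 < m := by rw [hm]; apply div_pos <;> linarith
  have hm1 : m < 1 := by rw [hm, div_lt_one (by linarith)]; linarith
  have hmγ : m * γ = (n - 2) * (2 * β - 1) / 4 := by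
    rw [hγ, hm]
    field_simp
    ring
  refine ⟨hm0, ?_, ?_⟩
  · rw [hγ]
    exact div_neg_of_neg_of_pos (by linarith) (by linarith)
  · rw [hmγ]
    nlinarith

def radialProfile {n : ℕ} (u : Euc n → ℝ) (i : Fin n) (r : ℝ) : ℝ :=
  u (r • EuclideanSpace.single i 1)

section RadialCalculus

variable {n : ℕ} {u : Euc n → ℝ}

lemma IsRadial.eq_radialProfile_norm (hu : IsRadial u) (i : Fin n) (x : Euc n) :
    u x = radialProfile u i ‖x‖ :=
  hu _ _ (by simp [norm_smul])

lemma ContDiff.radialProfile {k : WithTop ℕ∞} (hu : ContDiff ℝ k u) (i : Fin n) :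
    ContDiff ℝ k (radialProfile u i) :=
  hu.comp (contDiff_id.smul contDiff_const)

lemma hasDerivAt_comp_add_smul {x v : Euc n} {t : ℝ}
    (hu : DifferentiableAt ℝ u (x + t • v)) :
    HasDerivAt (fun s : ℝ => u (x + s • v)) (fderiv ℝ u (x + t • v) v) t := by
  have hline : HasDerivAt (fun s : ℝ => x + s • v) v t := by
    simpa using ((hasDerivAt_id t).smul_const v).const_add x
  exact hu.hasFDerivAt.comp_hasDerivAt t hline

lemma fderiv_fderiv_apply_eq_deriv_deriv (hu : ContDiff ℝ 2 u) (x v : Euc n) :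
    fderiv ℝ (fun y => fderiv ℝ u y v) x v = deriv (deriv fun s : ℝ => u (x + s • v)) 0 := by
  have hdu : Differentiable ℝ u := hu.differentiable (by norm_num)
  have hdu' : Differentiable ℝ (fun y => fderiv ℝ u y v) :=
    ((hu.fderiv_right (m := 1) (by norm_num)).clm_apply contDiff_const).differentiable
      (by norm_num)
  have hderiv : deriv (fun s : ℝ => u (x + s • v)) = fun t => fderiv ℝ u (x + t • v) v :=
    funext fun t => (hasDerivAt_comp_add_smul (hdu _)).deriv
  simpa [hderiv] using (hasDerivAt_comp_add_smul (x := x) (v := v) (t := 0) (hdu' _)).deriv.symm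

lemma IsRadial.inner_gradient (hu : IsRadial u) (hdu : Differentiable ℝ u) (i : Fin n)
    (x : Euc n) : ⟪x, gradient u x⟫ = ‖x‖ * deriv (radialProfile u i) ‖x‖ := by
  have hdφ : Differentiable ℝ (radialProfile u i) :=
    hdu.comp (differentiable_id.smul_const _)
  have hfderiv : ⟪x, gradient u x⟫ = fderiv ℝ u x x := by
    rw [real_inner_comm]
    exact InnerProductSpace.toDual_symm_apply
  have hscale : (fun s : ℝ => u (x + s • x)) =ᶠ[𝓝 0]
      fun s => radialProfile u i ((1 + s) * ‖x‖) := by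
    filter_upwards [Ioi_mem_nhds (by norm_num : (-1 : ℝ) < 0)] with s hs
    have hs : 0 < 1 + s := by linarith [Set.mem_Ioi.mp hs]
    rw [hu.eq_radialProfile_norm i, show x + s • x = (1 + s) • x by rw [add_smul, one_smul],
      norm_smul, Real.norm_of_nonneg hs.le]
  have hφ : HasDerivAt (fun s : ℝ => radialProfile u i ((1 + s) * ‖x‖))
      (deriv (radialProfile u i) ‖x‖ * ‖x‖) 0 := by
    have hlin : HasDerivAt (fun s : ℝ => (1 + s) * ‖x‖) ‖x‖ 0 := by
      simpa using ((hasDerivAt_id (0 : ℝ)).const_add 1).mul_const ‖x‖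
    exact (hdφ ‖x‖).hasDerivAt.comp_of_eq 0 hlin (by simp)
  have hline := hasDerivAt_comp_add_smul (x := x) (v := x) (t := 0) (by simpa using hdu x)
  simp only [zero_smul, add_zero] at hline
  rw [hfderiv, (hline.congr_of_eventuallyEq hscale.symm).unique hφ, mul_comm]

lemma norm_smul_single_add_smul_single {i j : Fin n} (hij : i ≠ j) (r s : ℝ) :
    ‖r • EuclideanSpace.single i (1 : ℝ) + s • EuclideanSpace.single j 1‖ = √(r ^ 2 + s ^ 2) := by
  have horth : ⟪r • EuclideanSpace.single i (1 : ℝ), s • EuclideanSpace.single j 1⟫ = 0 := by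
    simp [real_inner_smul_left, real_inner_smul_right, EuclideanSpace.inner_single_left, hij]
  rw [← Real.sqrt_sq (norm_nonneg _), norm_add_sq_real, horth]
  simp [norm_smul, sq_abs]

lemma IsRadial.lap_smul_single (hu : IsRadial u) (hu2 : ContDiff ℝ 2 u) (i : Fin n) {r : ℝ}
    (hr : 0 < r) :
    lap u (r • EuclideanSpace.single i 1) = deriv (deriv (radialProfile u i)) r
      + ((n : ℝ) - 1) * deriv (radialProfile u i) r / r := by
  set φ := radialProfile u i
  have hφ2 : ContDiff ℝ 2 φ := hu2.radialProfile i
  have hradial_term : ∀ j ≠ i, fderiv ℝ (fun y => fderiv ℝ u y (EuclideanSpace.single j 1))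
      (r • EuclideanSpace.single i 1) (EuclideanSpace.single j 1) = deriv φ r / r := by
    intro j hji
    rw [fderiv_fderiv_apply_eq_deriv_deriv hu2]
    have hline : (fun s : ℝ => u (r • EuclideanSpace.single i 1 + s • EuclideanSpace.single j 1))
        = fun s => φ √(r ^ 2 + s ^ 2) := by
      funext s
      rw [hu.eq_radialProfile_norm i, norm_smul_single_add_smul_single hji.symm]
    rw [hline, deriv_deriv_comp_sqrt_sq_add_sq (hφ2.differentiable (by norm_num))
      (hφ2.differentiable_deriv_two r) hr]
  have haxial_term : fderiv ℝ (fun y => fderiv ℝ u y (EuclideanSpace.single i 1))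
      (r • EuclideanSpace.single i 1) (EuclideanSpace.single i 1) = deriv (deriv φ) r := by
    rw [fderiv_fderiv_apply_eq_deriv_deriv hu2]
    have hline : (fun s : ℝ => u (r • EuclideanSpace.single i 1 + s • EuclideanSpace.single i 1))
        = fun s => φ (r + s) := by
      funext s
      rw [← add_smul]
      rfl
    have hderiv : deriv (fun s => φ (r + s)) = fun s => deriv φ (r + s) :=
      funext fun s => deriv_comp_const_add φ r s
    rw [hline, hderiv, deriv_comp_const_add, add_zero]
  unfold lap
  rw [← Finset.add_sum_erase _ _ (Finset.mem_univ i), haxial_term,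
    Finset.sum_congr rfl fun j hj => hradial_term j (Finset.ne_of_mem_erase hj),
    Finset.sum_const, Finset.card_erase_of_mem (Finset.mem_univ i), Finset.card_univ,
    Fintype.card_fin, nsmul_eq_mul, Nat.cast_pred (Fin.pos i)]
  ring

end RadialCalculus

def radialLowerOrder (β γ : ℝ) (φ : ℝ → ℝ) (r : ℝ) : ℝ :=
  β * (r * deriv φ r) + γ * φ r

lemma continuous_radialLowerOrder {β γ : ℝ} {φ : ℝ → ℝ} (hφ : ContDiff ℝ 1 φ) :
    Continuous (radialLowerOrder β γ φ) := by
  have := hφ.continuous_deriv le_rfl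
  have := hφ.continuous
  unfold radialLowerOrder
  fun_prop

lemma hasDerivAt_radialLowerOrder {β γ : ℝ} {φ : ℝ → ℝ} (hφ : Differentiable ℝ φ) {r : ℝ}
    (hφ' : DifferentiableAt ℝ (deriv φ) r) :
    HasDerivAt (radialLowerOrder β γ φ)
      (β * (deriv φ r + r * deriv (deriv φ) r) + γ * deriv φ r) r := by
  have hprod : HasDerivAt (fun t => t * deriv φ t) (1 * deriv φ r + r * deriv (deriv φ) r) r :=
    (hasDerivAt_id' r).mul hφ'.hasDerivAt
  rw [one_mul] at hprod
  exact (hprod.const_mul β).add ((hφ r).hasDerivAt.const_mul γ)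

section YamabeSoliton

variable {n : ℕ} {m β γ : ℝ} {u : Euc n → ℝ}

lemma YamabePDE.radialLowerOrder_eq (hpde : YamabePDE m β γ u) (hu : IsRadial u)
    (hdu : Differentiable ℝ u) (i : Fin n) (x : Euc n) :
    ((n : ℝ) - 1) / m * lap (fun y => u y ^ m) x
      + radialLowerOrder β γ (radialProfile u i) ‖x‖ = 0 := by
  have h := hpde x
  rw [hu.inner_gradient hdu i, hu.eq_radialProfile_norm i x] at h
  rw [radialLowerOrder]
  linarith

lemma YamabePDE.radial_ode (hpde : YamabePDE m β γ u) (hu : IsRadial u) (hu2 : ContDiff ℝ 2 u)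
    (hpos : ∀ x, 0 < u x) (hn : 1 < n) (hm : 0 < m) (i : Fin n) {r : ℝ} (hr : 0 < r)
    (hzero : radialLowerOrder β γ (radialProfile u i) r = 0) :
    let φ := radialProfile u i
    deriv (deriv φ) r + (m - 1) * deriv φ r ^ 2 / φ r + ((n : ℝ) - 1) * deriv φ r / r = 0 := by
  intro φ
  have hφ2 : ContDiff ℝ 2 φ := hu2.radialProfile i
  have hφpos : ∀ t, 0 < φ t := fun t => hpos _
  have hw2 : ContDiff ℝ 2 (fun y => u y ^ m) := hu2.rpow_const_of_ne fun y => (hpos y).ne'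
  have hwrad : IsRadial (fun y => u y ^ m) := fun x y hxy => congrArg (· ^ m) (hu x y hxy)
  have hlap : lap (fun y => u y ^ m) (r • EuclideanSpace.single i 1) = 0 := by
    have h := hpde.radialLowerOrder_eq hu (hu2.differentiable (by norm_num)) i
      (r • EuclideanSpace.single i 1)
    rw [show ‖r • EuclideanSpace.single i (1 : ℝ)‖ = r by simp [norm_smul, hr.le], hzero,
      add_zero] at h
    have hA : ((n : ℝ) - 1) / m ≠ 0 :=
      div_ne_zero (sub_ne_zero.mpr (by exact_mod_cast hn.ne')) hm.ne'
    exact (mul_eq_zero.mp h).resolve_left hA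
  rw [hwrad.lap_smul_single hw2 i hr] at hlap
  change deriv (deriv fun t => φ t ^ m) r + ((n : ℝ) - 1) * deriv (fun t => φ t ^ m) r / r = 0
    at hlap
  rw [deriv_deriv_rpow_const_of_pos (hφ2.differentiable (by norm_num))
      (hφ2.differentiable_deriv_two r) hφpos,
    deriv_rpow_const_of_pos (hφ2.differentiable (by norm_num)) hφpos] at hlap
  have hc : m * φ r ^ (m - 1) ≠ 0 := (mul_pos hm (Real.rpow_pos_of_pos (hφpos r) _)).ne'
  refine (mul_eq_zero.mp ?_).resolve_left hc
  linear_combination hlap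

lemma YamabePDE.deriv_radialLowerOrder_neg (hpde : YamabePDE m β γ u) (hu : IsRadial u)
    (hu2 : ContDiff ℝ 2 u) (hpos : ∀ x, 0 < u x) (hn : 1 < n) (hm : 0 < m) (hβ : 0 < β)
    (hγ : γ < 0) (hmγ : m * γ < ((n : ℝ) - 2) * β) (i : Fin n) {r : ℝ} (hr : 0 < r)
    (hzero : radialLowerOrder β γ (radialProfile u i) r = 0) :
    deriv (radialLowerOrder β γ (radialProfile u i)) r < 0 := by
  have hφ2 : ContDiff ℝ 2 (radialProfile u i) := hu2.radialProfile i
  rw [(hasDerivAt_radialLowerOrder (hφ2.differentiable (by norm_num))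
    (hφ2.differentiable_deriv_two r)).deriv]
  exact slope_neg_of_radial_ode (hpos _) hr hβ hγ hmγ
    (hpde.radial_ode hu hu2 hpos hn hm i hr hzero) hzero

end YamabeSoliton

lemma scalarCurv_neg_of_lap_pos {n : ℕ} (hn : 2 < n) {m : ℝ} {u : Euc n → ℝ} {x : Euc n}
    (hu : 0 < u x) (hlap : 0 < lap (fun y => u y ^ m) x) : scalarCurv m u x < 0 := by
  have hn' : (2 : ℝ) < n := by exact_mod_cast hn
  have hc : 0 < 4 * ((n : ℝ) - 1) / ((n : ℝ) - 2) := by apply div_pos <;> linarith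
  rw [scalarCurv, neg_mul, neg_div, neg_lt_zero]
  exact div_pos (mul_pos hc hlap) hu

/-- expanders with 0 < β < 1/2 (so γ < 0) have R < 0. -/
theorem expander_scalar_curv_neg (n : ℕ) (hn : 3 ≤ n)
    (m β γ : ℝ)
    (hm : m = ((n : ℝ) - 2) / ((n : ℝ) + 2))
    (hβ : 0 < β) (hβ' : β < 1 / 2)
    (hγ : γ = (2 * β - 1) / (1 - m))
    (u : Euc n → ℝ)
    (hpos : ∀ x, 0 < u x) (hsmooth : ContDiff ℝ (⊤ : ℕ∞) u)
    (hrad : IsRadial u) (hpde : YamabePDE m β γ u) :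
    ∀ x : Euc n, scalarCurv m u x < 0 := by
  intro x
  obtain ⟨hm0, hγ0, hmγ⟩ :=
    expander_parameters (by exact_mod_cast hn : (2 : ℝ) < n) hm hβ hβ' hγ
  have hu2 : ContDiff ℝ 2 u := hsmooth.of_le (by norm_cast)
  let i : Fin n := ⟨0, by omega⟩
  have hg0 : radialLowerOrder β γ (radialProfile u i) 0 < 0 := by
    simp only [radialLowerOrder, zero_mul, mul_zero, zero_add]
    exact mul_neg_of_neg_of_pos hγ0 (hpos _)
  have hgx : radialLowerOrder β γ (radialProfile u i) ‖x‖ < 0 :=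
    neg_of_deriv_neg_at_zeros
      (continuous_radialLowerOrder ((hu2.radialProfile i).of_le (by norm_num))) hg0
      (fun r hr hzero => hpde.deriv_radialLowerOrder_neg hrad hu2 hpos (by omega) hm0 hβ hγ0 hmγ
        i hr hzero)
      (norm_nonneg x)
  have hA : 0 < ((n : ℝ) - 1) / m := div_pos (by norm_num; omega) hm0
  have hx := hpde.radialLowerOrder_eq hrad (hu2.differentiable (by norm_num)) i x
  exact scalarCurv_neg_of_lap_pos (by omega) (hpos x) (pos_of_mul_pos_right (by linarith) hA.le)
end
end

section
/- Let n ≥ 3 be an integer, m = (n−2)/(n+2), θ > 0, and s₀ ∈ ℝ. Let v : (−∞, s₀] → ℝ be a smooth positive function with lim_{s→−∞} v(s) = 0, satisfying the ODE (v^m)'' + θ·v' − ((n−2)²/4)·v^m = 0 on (−∞, s₀]. Then v'(s) ≥ 0 for all s ≤ s₀. -/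
open Real MeasureTheory Metric
open scoped Topology RealInnerProductSpace

noncomputable section

/-! Put `w = v ^ m`; then `w' = m v ^ (m - 1) v'` has the sign of `v'`. As `w → 0` at `-∞` while
`w > 0`, the mean value theorem gives a point `ξ < s` with `w' ξ > 0`. At a zero
of `w'` also `v' = 0`, so the ODE reduces to `w'' = ((n - 2) ^ 2 / 4) w > 0`: `w'` can cross zero only
upwards, and therefore stays nonnegative from `ξ` up to `s`. -/

open Filter Set

theorem nonneg_of_deriv_pos_of_eq_zero {g : ℝ → ℝ} {a b : ℝ} (hab : a ≤ b)
    (hg : ∀ x ∈ Icc a b, DifferentiableAt ℝ g x) (ha : 0 ≤ g a)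
    (hzero : ∀ x ∈ Ico a b, g x = 0 → 0 < deriv g x) : 0 ≤ g b := by
  have key := image_le_of_deriv_right_lt_deriv_boundary' (f := fun x => -g x) (B := 0) (B' := 0)
    (fun x hx => (hg x hx).continuousAt.continuousWithinAt.neg)
    (fun x hx => ((hg x (Ico_subset_Icc_self hx)).hasDerivAt.neg).hasDerivWithinAt)
    (by simpa using ha) continuousOn_const (fun x _ => hasDerivWithinAt_const _ _ _)
    (fun x hx hgx => by simpa using hzero x hx (neg_eq_zero.mp hgx))
    (right_mem_Icc.mpr hab)
  simpa using key

theorem exists_deriv_pos_of_tendsto_atBot {w : ℝ → ℝ} {c b : ℝ} (hlim : Tendsto w atBot (𝓝 c))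
    (hb : c < w b) (hw : DifferentiableOn ℝ w (Iic b)) : ∃ ξ < b, 0 < deriv w ξ := by
  obtain ⟨a, hwa, hab⟩ := ((hlim.eventually_lt_const hb).and (eventually_lt_atBot b)).exists
  obtain ⟨ξ, hξ, hslope⟩ := exists_deriv_eq_slope w hab (hw.continuousOn.mono Icc_subset_Iic_self)
    (hw.mono (Ioo_subset_Icc_self.trans Icc_subset_Iic_self))
  exact ⟨ξ, hξ.2, hslope ▸ div_pos (sub_pos.mpr hwa) (sub_pos.mpr hab)⟩

theorem deriv_rpow_const_of_pos_s9 {v : ℝ → ℝ} {m x : ℝ} (hv : DifferentiableAt ℝ v x)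
    (hx : 0 < v x) : deriv (fun t => v t ^ m) x = deriv v x * (m * v x ^ (m - 1)) := by
  rw [(hv.hasDerivAt.rpow_const (Or.inl hx.ne')).deriv, mul_assoc]

theorem deriv_nonneg_of_cylindrical_ode {m θ c s₀ : ℝ} {v : ℝ → ℝ} (hm : 0 < m) (hc : 0 < c)
    (hv : ContDiff ℝ 2 v) (hpos : ∀ s ≤ s₀, 0 < v s) (hlim : Tendsto v atBot (𝓝 0))
    (hode : ∀ s ≤ s₀, deriv (deriv fun t => v t ^ m) s + θ * deriv v s - c * v s ^ m = 0) :
    ∀ s ≤ s₀, 0 ≤ deriv v s := by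
  intro s₁ hs₁
  set w : ℝ → ℝ := fun t => v t ^ m
  have hvdiff : Differentiable ℝ v := hv.differentiable two_ne_zero
  have hfactor : ∀ x ≤ s₀, 0 < m * v x ^ (m - 1) := fun x hx =>
    mul_pos hm (rpow_pos_of_pos (hpos x hx) _)
  have hU : IsOpen {x | 0 < v x} := isOpen_lt continuous_const hv.continuous
  have hwC : ContDiffOn ℝ 2 w {x | 0 < v x} :=
    hv.contDiffOn.rpow_const_of_ne fun x hx => ne_of_gt hx
  have hwdiff : DifferentiableOn ℝ w (Iic s₀) :=
    (hwC.differentiableOn two_ne_zero).mono fun x hx => hpos x hx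
  have hw'diff : ∀ x ≤ s₀, DifferentiableAt ℝ (deriv w) x := fun x hx =>
    ((hwC.deriv_of_isOpen hU (m := 1) (by norm_num)).differentiableOn one_ne_zero x
      (hpos x hx)).differentiableAt (hU.mem_nhds (hpos x hx))
  have hwlim : Tendsto w atBot (𝓝 0) := by
    simpa [w, zero_rpow hm.ne'] using hlim.rpow_const (Or.inr hm.le)
  obtain ⟨ξ, hξ, hwξ⟩ := exists_deriv_pos_of_tendsto_atBot hwlim (rpow_pos_of_pos (hpos s₁ hs₁) m)
    (hwdiff.mono (Iic_subset_Iic.mpr hs₁))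
  have hcrit : ∀ x ∈ Ico ξ s₁, deriv w x = 0 → 0 < deriv (deriv w) x := by
    intro x hx hwx
    have hxs₀ : x ≤ s₀ := hx.2.le.trans hs₁
    rw [deriv_rpow_const_of_pos_s9 (hvdiff x) (hpos x hxs₀)] at hwx
    have hvx : deriv v x = 0 := (mul_eq_zero.mp hwx).resolve_right (hfactor x hxs₀).ne'
    have := hode x hxs₀
    rw [hvx] at this
    linarith [mul_pos hc (rpow_pos_of_pos (hpos x hxs₀) m)]
  have hws₁ : 0 ≤ deriv w s₁ := nonneg_of_deriv_pos_of_eq_zero hξ.le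
    (fun x hx => hw'diff x (hx.2.trans hs₁)) hwξ.le hcrit
  rw [deriv_rpow_const_of_pos_s9 (hvdiff s₁) (hpos s₁ hs₁)] at hws₁
  exact nonneg_of_mul_nonneg_left hws₁ (hfactor s₁ hs₁)

theorem steady_cylindrical_monotone_general (n : ℕ) (hn : 3 ≤ n)
    (m θ : ℝ)
    (hm : m = ((n : ℝ) - 2) / ((n : ℝ) + 2))
    (s₀ : ℝ)
    (v : ℝ → ℝ) (hsmooth : ContDiff ℝ (⊤ : ℕ∞) v)
    (hpos : ∀ s, s ≤ s₀ → 0 < v s)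
    (hlim : Filter.Tendsto v Filter.atBot (𝓝 0))
    (hode : ∀ s, s ≤ s₀ →
      deriv (deriv (fun t => v t ^ m)) s + θ * deriv v s
        - ((n : ℝ) - 2) ^ 2 / 4 * v s ^ m = 0) :
    ∀ s, s ≤ s₀ → 0 ≤ deriv v s := by
  have hn' : (3 : ℝ) ≤ n := by exact_mod_cast hn
  have hm_pos : 0 < m := hm ▸ div_pos (by linarith) (by linarith)
  have hc_pos : 0 < ((n : ℝ) - 2) ^ 2 / 4 := div_pos (pow_pos (by linarith) 2) four_pos
  exact deriv_nonneg_of_cylindrical_ode hm_pos hc_pos (hsmooth.of_le (by norm_cast))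
    hpos hlim hode

/-- the cylindrical conformal factor of a steady soliton is nondecreasing. -/
theorem steady_cylindrical_monotone (n : ℕ) (hn : 3 ≤ n)
    (m θ : ℝ)
    (hm : m = ((n : ℝ) - 2) / ((n : ℝ) + 2))
    (hθ : 0 < θ) (s₀ : ℝ)
    (v : ℝ → ℝ) (hsmooth : ContDiff ℝ (⊤ : ℕ∞) v)
    (hpos : ∀ s, s ≤ s₀ → 0 < v s)
    (hlim : Filter.Tendsto v Filter.atBot (𝓝 0))
    (hode : ∀ s, s ≤ s₀ →
      deriv (deriv (fun t => v t ^ m)) s + θ * deriv v s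
        - ((n : ℝ) - 2) ^ 2 / 4 * v s ^ m = 0) :
    ∀ s, s ≤ s₀ → 0 ≤ deriv v s :=
  steady_cylindrical_monotone_general n hn m θ hm s₀ v hsmooth hpos hlim hode
end
end

section
/- Let n ≥ 3 be an integer, m = (n−2)/(n+2), θ > 0, and s₀ ∈ ℝ. Let v : (−∞, s₀] → ℝ be a smooth positive function with v'(s) ≥ 0 for all s, lim_{s→−∞} v(s) = 0, and lim_{s→−∞} (v^m)'(s) = 0, satisfying the ODE (v^m)'' + θ·v' − ((n−2)²/4)·v^m = 0 on (−∞, s₀]. Then (v^m)'(s) ≤ ((n−2)/2)·v(s)^m for all s ≤ s₀. -/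
/-!
With `w = v^m` and `c = (n-2)/2`, the ODE and `v' ≥ 0` give `w'' ≤ c² w`. Hence
`F(s) = e^{cs} (w' - c w)` has `F' = e^{cs} (w'' - c² w) ≤ 0`, so `F` is nonincreasing; since
`w` and `w'` vanish at `-∞`, `F → 0` there, and therefore `F ≤ 0`, i.e. `w' ≤ c w`.
-/

open Real MeasureTheory Metric
open scoped Topology RealInnerProductSpace

noncomputable section

open Filter Set

theorem AntitoneOn.le_of_tendsto_atBot {f : ℝ → ℝ} {a L : ℝ} (hf : AntitoneOn f (Iic a))
    (hL : Tendsto f atBot (𝓝 L)) {s : ℝ} (hs : s ≤ a) : f s ≤ L :=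
  ge_of_tendsto hL <| (eventually_le_atBot s).mono fun _ ht => hf (ht.trans hs) hs ht

theorem hasDerivAt_exp_mul_mul_deriv_sub {w w' : ℝ → ℝ} {w'' c x : ℝ}
    (hw : HasDerivAt w (w' x) x) (hw' : HasDerivAt w' w'' x) :
    HasDerivAt (fun t => exp (c * t) * (w' t - c * w t))
      (exp (c * x) * (w'' - c ^ 2 * w x)) x := by
  have hexp : HasDerivAt (fun t => exp (c * t)) (exp (c * x) * c) x := by
    simpa using ((hasDerivAt_id x).const_mul c).exp
  exact (hexp.fun_mul (hw'.fun_sub (hw.const_mul c))).congr_deriv (by ring)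

theorem deriv_le_mul_of_deriv_deriv_le_sq_mul {w : ℝ → ℝ} {c s₀ : ℝ} (hc : 0 < c)
    (hw : ∀ x ≤ s₀, ContDiffAt ℝ 2 w x)
    (hsub : ∀ x < s₀, deriv (deriv w) x ≤ c ^ 2 * w x)
    (hw0 : Tendsto w atBot (𝓝 0)) (hw'0 : Tendsto (deriv w) atBot (𝓝 0)) :
    ∀ s ≤ s₀, deriv w s ≤ c * w s := by
  set F : ℝ → ℝ := fun t => exp (c * t) * (deriv w t - c * w t)
  have hF : ∀ x ≤ s₀, HasDerivAt F (exp (c * x) * (deriv (deriv w) x - c ^ 2 * w x)) x :=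
    fun x hx => hasDerivAt_exp_mul_mul_deriv_sub ((hw x hx).differentiableAt two_ne_zero).hasDerivAt
      (((hw x hx).derivWithin (m := 1) le_rfl).differentiableAt one_ne_zero).hasDerivAt
  have hanti : AntitoneOn F (Iic s₀) := by
    refine antitoneOn_of_deriv_nonpos (convex_Iic s₀)
      (fun x hx => (hF x hx).continuousAt.continuousWithinAt) (fun x hx => ?_) (fun x hx => ?_)
    all_goals rw [interior_Iic] at hx
    · exact (hF x hx.le).differentiableAt.differentiableWithinAt
    · rw [(hF x hx.le).deriv]
      exact mul_nonpos_of_nonneg_of_nonpos (exp_pos _).le (by linarith [hsub x hx])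
  have hFlim : Tendsto F atBot (𝓝 0) := by
    have hexp : Tendsto (fun t => exp (c * t)) atBot (𝓝 0) :=
      tendsto_exp_atBot.comp (tendsto_id.const_mul_atBot hc)
    simpa using hexp.mul (hw'0.sub (hw0.const_mul c))
  intro s hs
  have hFs : F s ≤ 0 := hanti.le_of_tendsto_atBot hFlim hs
  have : deriv w s - c * w s ≤ 0 := nonpos_of_mul_nonpos_right hFs (exp_pos _)
  linarith

/-- gradient bound (v^m)' ≤ ((n-2)/2)·v^m for steady cylindrical solutions. -/
theorem steady_cylindrical_gradient_bound (n : ℕ) (hn : 3 ≤ n)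
    (m θ : ℝ)
    (hm : m = ((n : ℝ) - 2) / ((n : ℝ) + 2))
    (hθ : 0 < θ) (s₀ : ℝ)
    (v : ℝ → ℝ) (hsmooth : ContDiff ℝ (⊤ : ℕ∞) v)
    (hpos : ∀ s, s ≤ s₀ → 0 < v s)
    (hmono : ∀ s, s ≤ s₀ → 0 ≤ deriv v s)
    (hlim : Filter.Tendsto v Filter.atBot (𝓝 0))
    (hlim' : Filter.Tendsto (deriv (fun t => v t ^ m)) Filter.atBot (𝓝 0))
    (hode : ∀ s, s ≤ s₀ →
      deriv (deriv (fun t => v t ^ m)) s + θ * deriv v s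
        - ((n : ℝ) - 2) ^ 2 / 4 * v s ^ m = 0) :
    ∀ s, s ≤ s₀ → deriv (fun t => v t ^ m) s ≤ ((n : ℝ) - 2) / 2 * v s ^ m := by
  have hn3 : (3 : ℝ) ≤ n := by exact_mod_cast hn
  have hm0 : 0 < m := hm ▸ div_pos (by linarith) (by linarith)
  have hw : ∀ x ≤ s₀, ContDiffAt ℝ 2 (fun t => v t ^ m) x := fun x hx =>
    ((hsmooth.of_le (WithTop.coe_le_coe.2 le_top)).contDiffAt).rpow_const_of_ne (hpos x hx).ne'
  have hsub : ∀ x < s₀, deriv (deriv fun t => v t ^ m) x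
      ≤ (((n : ℝ) - 2) / 2) ^ 2 * v x ^ m := fun x hx => by
    linarith [hode x hx.le, mul_nonneg hθ.le (hmono x hx.le)]
  have hw0 : Tendsto (fun t => v t ^ m) atBot (𝓝 0) := by
    simpa [zero_rpow hm0.ne'] using hlim.rpow_const (Or.inr hm0.le)
  exact deriv_le_mul_of_deriv_deriv_le_sq_mul (by linarith) hw hsub hw0 hlim'
end
end

section
/- Let n ≥ 6 be an integer, set α = 4/(n−2) (so α ≤ 1), let θ > 0 and s₀ ∈ ℝ. Let w : [s₀, ∞) → ℝ be a smooth positive function with w'(s) ≥ 0 for all s ≥ s₀, satisfying the ODE w'' = ((α−1)/α)·(w')²/w − (α+1)·θ·w'·w + (4/α)·w on [s₀, ∞). Then for all s ≥ s₀, w'(s) ≤ max{ 4/(α(α+1)θ), w'(s₀) }. -/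
open Real MeasureTheory Metric
open scoped Topology RealInnerProductSpace

noncomputable section

/-! Once `w'` reaches the level `4/(α(α+1)θ)`, the right-hand side of the ODE is nonpositive:
`(α+1)θ w' w` dominates `4w/α`, and `(α-1)/α ≤ 0` because `α ≤ 1` for `n ≥ 6`. So `w'` cannot
climb above that level or its initial value. -/

theorem le_max_of_hasDerivAt_nonpos_of_le {f f' : ℝ → ℝ} {a C : ℝ}
    (hf : ∀ x, a ≤ x → HasDerivAt f (f' x) x)
    (hf' : ∀ x, a ≤ x → C ≤ f x → f' x ≤ 0) :
    ∀ x, a ≤ x → f x ≤ max C (f a) := by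
  intro x hx
  set M := max C (f a)
  -- Fence `f` by the lines `M + δ (y - a)` of positive slope `δ`, then let `δ → 0`.
  have fence : ∀ δ > 0, f x ≤ M + δ * (x - a) := by
    intro δ hδ
    have hB : ∀ y, HasDerivAt (fun y => M + δ * (y - a)) δ y := fun y => by
      simpa using (((hasDerivAt_id y).sub_const a).const_mul δ).const_add M
    refine image_le_of_deriv_right_lt_deriv_boundary
      (fun y hy => (hf y hy.1).continuousAt.continuousWithinAt)
      (fun y hy => (hf y hy.1).hasDerivWithinAt) (by simp [M]) hB ?_ ⟨hx, le_rfl⟩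
    rintro y ⟨hay, -⟩ hfy
    have hCf : C ≤ f y := by
      rw [hfy]
      nlinarith [le_max_left C (f a), mul_nonneg hδ.le (sub_nonneg.2 hay)]
    exact (hf' y hay hCf).trans_lt hδ
  refine le_of_forall_pos_le_add fun ε hε => ?_
  have hxa : 0 < x - a + 1 := by linarith
  calc f x ≤ M + ε / (x - a + 1) * (x - a) := fence _ (div_pos hε hxa)
    _ ≤ M + ε := by
      rw [add_le_add_iff_left, div_mul_eq_mul_div, div_le_iff₀ hxa]
      nlinarith

theorem steadyYamabe_rhs_nonpos {α θ w v : ℝ} (hα₀ : 0 < α) (hα₁ : α ≤ 1) (hθ : 0 < θ)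
    (hw : 0 < w) (hv : 4 / (α * (α + 1) * θ) ≤ v) :
    (α - 1) / α * v ^ 2 / w - (α + 1) * θ * v * w + 4 / α * w ≤ 0 := by
  have hquad : (α - 1) / α * v ^ 2 / w ≤ 0 :=
    div_nonpos_of_nonpos_of_nonneg
      (mul_nonpos_of_nonpos_of_nonneg (div_nonpos_of_nonpos_of_nonneg (by linarith) hα₀.le)
        (sq_nonneg v))
      hw.le
  have hlin : 4 / α ≤ (α + 1) * θ * v := by
    rw [div_le_iff₀ (by positivity)] at hv
    rw [div_le_iff₀ hα₀]
    linarith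
  nlinarith

theorem four_div_sub_two_mem_Ioc {n : ℕ} (hn : 6 ≤ n) :
    4 / ((n : ℝ) - 2) ∈ Set.Ioc 0 1 := by
  have hn' : (6 : ℝ) ≤ n := by exact_mod_cast hn
  exact ⟨div_pos four_pos (by linarith), (div_le_one (by linarith)).2 (by linarith)⟩

theorem steady_w_derivative_bound_general (n : ℕ) (hn : 6 ≤ n)
    (α θ : ℝ)
    (hα : α = 4 / ((n : ℝ) - 2))
    (hθ : 0 < θ) (s₀ : ℝ)
    (w : ℝ → ℝ) (hsmooth : ContDiff ℝ (⊤ : ℕ∞) w)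
    (hpos : ∀ s, s₀ ≤ s → 0 < w s)
    (hode : ∀ s, s₀ ≤ s →
      deriv (deriv w) s = (α - 1) / α * (deriv w s) ^ 2 / w s
        - (α + 1) * θ * deriv w s * w s + 4 / α * w s) :
    ∀ s, s₀ ≤ s → deriv w s ≤ max (4 / (α * (α + 1) * θ)) (deriv w s₀) := by
  obtain ⟨hα₀, hα₁⟩ : 0 < α ∧ α ≤ 1 := hα ▸ four_div_sub_two_mem_Ioc hn
  have hw' : Differentiable ℝ (deriv w) :=
    (contDiff_infty_iff_deriv.mp hsmooth).2.differentiable (by simp)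
  refine le_max_of_hasDerivAt_nonpos_of_le (fun s _ => (hw' s).hasDerivAt) fun s hs hle => ?_
  rw [hode s hs]
  exact steadyYamabe_rhs_nonpos hα₀ hα₁ hθ (hpos s hs) hle

/-- derivative bound for the cylindrical conformal factor, n ≥ 6. -/
theorem steady_w_derivative_bound (n : ℕ) (hn : 6 ≤ n)
    (α θ : ℝ)
    (hα : α = 4 / ((n : ℝ) - 2))
    (hθ : 0 < θ) (s₀ : ℝ)
    (w : ℝ → ℝ) (hsmooth : ContDiff ℝ (⊤ : ℕ∞) w)
    (hpos : ∀ s, s₀ ≤ s → 0 < w s)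
    (hmono : ∀ s, s₀ ≤ s → 0 ≤ deriv w s)
    (hode : ∀ s, s₀ ≤ s →
      deriv (deriv w) s = (α - 1) / α * (deriv w s) ^ 2 / w s
        - (α + 1) * θ * deriv w s * w s + 4 / α * w s) :
    ∀ s, s₀ ≤ s → deriv w s ≤ max (4 / (α * (α + 1) * θ)) (deriv w s₀) :=
  steady_w_derivative_bound_general n hn α θ hα hθ s₀ w hsmooth hpos hode
end
end

section
/- Let n ≥ 3 be an integer, m = (n−2)/(n+2), θ > 0, and ρ ∈ {0, 1, −1}; in the case ρ = −1 assume additionally θ > m/(2(n−1)). Let w : ℝ → ℝ be a smooth positive function with w'(s) > 0 for all s, satisfying the ODE w·w'' + ((n−6)/4)·(w')² + (θ/m)·w²·w' + (ρ/(n−1))·w³ − (n−2)·w² = 0 on ℝ. If (w'(s))² − w(s)·w''(s) ≥ 0 for all s ∈ ℝ, then (w'(s))² − w(s)·w''(s) > 0 for all s ∈ ℝ. -/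
open Real MeasureTheory Metric
open scoped Topology RealInnerProductSpace

noncomputable section

/-!
By the ODE, `K₀ := (w')² - w w''` equals a cubic polynomial `P(w, w')`. At a zero `s₀` of the
nonnegative function `K₀`, the function `P(w, w')` has a local minimum, so it vanishes together
with its derivative. Eliminating `w''(s₀)` by means of `(w')² = w w''` forces
`w'(s₀) = 2 w(s₀)`, and then `P(w, 2w) = (2θ/m + ρ/(n-1)) w³ = 0`, which the assumptions on
`θ` and `ρ` rule out.
-/
/-- With `a = n - 2`, `b = θ / m`, `c = ρ / (n - 1)`, the soliton ODE reads
`(w')² - w w'' = k0Poly a b c w w'`. -/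
def k0Poly (a b c x y : ℝ) : ℝ :=
  a / 4 * y ^ 2 + b * x ^ 2 * y + c * x ^ 3 - a * x ^ 2

section k0Poly

variable {a b c : ℝ}

theorem k0Poly_two_mul (x : ℝ) : k0Poly a b c x (2 * x) = (2 * b + c) * x ^ 3 := by
  unfold k0Poly; ring

theorem hasDerivAt_k0Poly {u v : ℝ → ℝ} {u' v' s : ℝ} (hu : HasDerivAt u u' s)
    (hv : HasDerivAt v v' s) :
    HasDerivAt (fun t => k0Poly a b c (u t) (v t))
      (a / 2 * v s * v' + b * (2 * u s * u' * v s + u s ^ 2 * v')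
        + 3 * c * u s ^ 2 * u' - 2 * a * u s * u') s := by
  have h := (((hv.pow 2).const_mul (a / 4)).add (((hu.pow 2).const_mul b).mul hv)).add
    ((hu.pow 3).const_mul c) |>.sub ((hu.pow 2).const_mul a)
  refine (h : HasDerivAt (fun t => k0Poly a b c (u t) (v t)) _ s).congr_deriv ?_
  simp only [Pi.pow_apply]
  ring

/-- `(x, y, z)` stands for `(w, w', w'')` at `s₀`; `hdP` is the derivative given by
`hasDerivAt_k0Poly`. -/
theorem eq_two_mul_of_critical_zero (ha : 0 < a) {x y z : ℝ} (hx : 0 < x) (hy : 0 < y)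
    (hP : k0Poly a b c x y = 0) (hK : y ^ 2 - x * z = 0)
    (hdP : a / 2 * y * z + b * (2 * x * y * y + x ^ 2 * z) + 3 * c * x ^ 2 * y
      - 2 * a * x * y = 0) :
    y = 2 * x := by
  unfold k0Poly at hP
  have hfactor : a * y * ((2 * x - y) * (2 * x + y)) = 0 := by
    linear_combination 4 * x * hdP - 12 * y * hP + (2 * a * y + 4 * b * x ^ 2) * hK
  have hay : a * y ≠ 0 := (mul_pos ha hy).ne'
  have hsum : 2 * x + y ≠ 0 := by positivity
  have hdiff := (mul_eq_zero.mp ((mul_eq_zero.mp hfactor).resolve_left hay)).resolve_right hsum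
  linarith

theorem sq_deriv_sub_mul_deriv_deriv_pos (ha : 0 < a) (hbc : 2 * b + c ≠ 0) {w : ℝ → ℝ}
    {s : ℝ} (hw : DifferentiableAt ℝ w s) (hw' : DifferentiableAt ℝ (deriv w) s)
    (hpos : 0 < w s) (hmono : 0 < deriv w s)
    (hODE : ∀ t, deriv w t ^ 2 - w t * deriv (deriv w) t = k0Poly a b c (w t) (deriv w t))
    (hK0 : ∀ᶠ t in 𝓝 s, 0 ≤ deriv w t ^ 2 - w t * deriv (deriv w) t) :
    0 < deriv w s ^ 2 - w s * deriv (deriv w) s := by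
  refine (hK0.self_of_nhds).lt_of_ne fun hzero => ?_
  have hP : k0Poly a b c (w s) (deriv w s) = 0 := by rw [← hODE, ← hzero]
  have hmin : IsLocalMin (fun t => k0Poly a b c (w t) (deriv w t)) s := by
    filter_upwards [hK0] with t ht
    rw [hP, ← hODE]
    exact ht
  have hcrit := hmin.hasDerivAt_eq_zero (hasDerivAt_k0Poly hw.hasDerivAt hw'.hasDerivAt)
  have htwice := eq_two_mul_of_critical_zero ha hpos hmono hP hzero.symm hcrit
  rw [htwice, k0Poly_two_mul] at hP
  exact hbc ((mul_eq_zero.mp hP).resolve_right (by positivity))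

end k0Poly

theorem two_mul_div_add_div_pos {n m θ ρ : ℝ} (hn : 1 < n) (hm : 0 < m) (hθ : 0 < θ)
    (hρ : ρ = 0 ∨ ρ = 1 ∨ ρ = -1) (hθρ : ρ = -1 → m / (2 * (n - 1)) < θ) :
    0 < 2 * (θ / m) + ρ / (n - 1) := by
  have hθm : 0 < θ / m := div_pos hθ hm
  have hn1 : 0 < n - 1 := by linarith
  rcases hρ with rfl | rfl | rfl
  · simpa using hθm
  · positivity
  · have h := hθρ rfl
    rw [div_lt_iff₀ (by positivity)] at h
    have hsum : 2 * (θ / m) + -1 / (n - 1) = (θ * (2 * (n - 1)) - m) / (m * (n - 1)) := by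
      field_simp
      ring
    rw [hsum]
    exact div_pos (by linarith) (by positivity)

/-- strict positivity of the sectional curvature quantity (w')² - w·w''. -/
theorem K0_strictly_positive (n : ℕ) (hn : 3 ≤ n)
    (m θ ρ : ℝ)
    (hm : m = ((n : ℝ) - 2) / ((n : ℝ) + 2))
    (hθ : 0 < θ)
    (hρ : ρ = 0 ∨ ρ = 1 ∨ ρ = -1)
    (hθρ : ρ = -1 → m / (2 * ((n : ℝ) - 1)) < θ)
    (w : ℝ → ℝ) (hsmooth : ContDiff ℝ (⊤ : ℕ∞) w)
    (hpos : ∀ s, 0 < w s)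
    (hmono : ∀ s, 0 < deriv w s)
    (hode : ∀ s : ℝ,
      w s * deriv (deriv w) s + ((n : ℝ) - 6) / 4 * (deriv w s) ^ 2
        + θ / m * (w s) ^ 2 * deriv w s + ρ / ((n : ℝ) - 1) * (w s) ^ 3
        - ((n : ℝ) - 2) * (w s) ^ 2 = 0)
    (hK0 : ∀ s : ℝ, 0 ≤ (deriv w s) ^ 2 - w s * deriv (deriv w) s) :
    ∀ s : ℝ, 0 < (deriv w s) ^ 2 - w s * deriv (deriv w) s := by
  have hn' : (3 : ℝ) ≤ n := by exact_mod_cast hn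
  have hm0 : 0 < m := by rw [hm]; apply div_pos <;> linarith
  have hbc := two_mul_div_add_div_pos (by linarith) hm0 hθ hρ hθρ
  have hdw : ContDiff ℝ (⊤ : ℕ∞) (deriv w) := (contDiff_infty_iff_deriv.mp hsmooth).2
  have hODE : ∀ t, deriv w t ^ 2 - w t * deriv (deriv w) t
      = k0Poly ((n : ℝ) - 2) (θ / m) (ρ / ((n : ℝ) - 1)) (w t) (deriv w t) := fun t => by
    unfold k0Poly; linear_combination -(hode t)
  intro s
  exact sq_deriv_sub_mul_deriv_deriv_pos (by linarith) hbc.ne'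
    (hsmooth.differentiable (by simp) s) (hdw.differentiable (by simp) s) (hpos s) (hmono s)
    hODE (Filter.Eventually.of_forall hK0)
end
end

section
/- Let n ≥ 3 be an integer, m = (n−2)/(n+2), θ > 0, and ρ ∈ {0, 1, −1}; in the case ρ = −1 assume additionally θ > m/(2(n−1)). Let w : ℝ → ℝ be a smooth positive function with w'(s) > 0 for all s, satisfying the ODE w·w'' + ((n−6)/4)·(w')² + (θ/m)·w²·w' + (ρ/(n−1))·w³ − (n−2)·w² = 0 on ℝ. If 4·w(s)² − (w'(s))² ≥ 0 for all s ∈ ℝ, then 4·w(s)² − (w'(s))² > 0 for all s ∈ ℝ. -/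
/-!
If `4 w² - (w')²` vanished at some `s₀`, then `s₀` would be a minimum of this nonnegative
function, so its derivative `2 w' (4 w - w'')` would vanish there; as `w' > 0` this gives
`w' = 2 w` and `w'' = 4 w` at `s₀`. Substituted into the ODE, the quadratic terms cancel and
what is left is `(2θ/m + ρ/(n-1)) w³ = 0`, whereas the hypotheses on `θ` and `ρ` make this
coefficient positive.
-/

open Real MeasureTheory Metric
open scoped Topology RealInnerProductSpace

noncomputable section

theorem eq_two_mul_of_four_mul_sq_sub_sq_eq_zero {a b : ℝ} (ha : 0 ≤ a) (hb : 0 ≤ b)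
    (h : 4 * a ^ 2 - b ^ 2 = 0) : b = 2 * a :=
  (sq_eq_sq₀ hb (by positivity)).1 (by linear_combination -h)

theorem deriv_deriv_eq_four_mul_of_isLocalMin {w : ℝ → ℝ} {s₀ : ℝ}
    (hw : DifferentiableAt ℝ w s₀) (hw' : DifferentiableAt ℝ (deriv w) s₀)
    (hne : deriv w s₀ ≠ 0) (hmin : IsLocalMin (fun s => 4 * w s ^ 2 - deriv w s ^ 2) s₀) :
    deriv (deriv w) s₀ = 4 * w s₀ := by
  have hcrit := hmin.hasDerivAt_eq_zero
    (((hw.hasDerivAt.pow 2).const_mul 4).sub (hw'.hasDerivAt.pow 2))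
  have : 2 * deriv w s₀ * (4 * w s₀ - deriv (deriv w) s₀) = 0 := by
    linear_combination hcrit
  linarith [(mul_eq_zero.1 this).resolve_left (mul_ne_zero two_ne_zero hne)]

theorem two_mul_div_add_div_sub_one_pos {n m θ ρ : ℝ} (hn : 1 < n) (hm : 0 < m) (hθ : 0 < θ)
    (hρ : ρ = 0 ∨ ρ = 1 ∨ ρ = -1) (hθρ : ρ = -1 → m / (2 * (n - 1)) < θ) :
    0 < 2 * θ / m + ρ / (n - 1) := by
  have hn1 : 0 < n - 1 := sub_pos.2 hn
  rcases hρ with rfl | rfl | rfl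
  · positivity
  · positivity
  · have key : m < θ * (2 * (n - 1)) := (div_lt_iff₀ (by positivity)).1 (hθρ rfl)
    rw [div_add_div _ _ hm.ne' hn1.ne']
    apply div_pos <;> nlinarith

/-- strict positivity of the sectional curvature quantity 4w² - (w')². -/
theorem K1_strictly_positive (n : ℕ) (hn : 3 ≤ n)
    (m θ ρ : ℝ)
    (hm : m = ((n : ℝ) - 2) / ((n : ℝ) + 2))
    (hθ : 0 < θ)
    (hρ : ρ = 0 ∨ ρ = 1 ∨ ρ = -1)
    (hθρ : ρ = -1 → m / (2 * ((n : ℝ) - 1)) < θ)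
    (w : ℝ → ℝ) (hsmooth : ContDiff ℝ (⊤ : ℕ∞) w)
    (hpos : ∀ s, 0 < w s)
    (hmono : ∀ s, 0 < deriv w s)
    (hode : ∀ s : ℝ,
      w s * deriv (deriv w) s + ((n : ℝ) - 6) / 4 * (deriv w s) ^ 2
        + θ / m * (w s) ^ 2 * deriv w s + ρ / ((n : ℝ) - 1) * (w s) ^ 3
        - ((n : ℝ) - 2) * (w s) ^ 2 = 0)
    (hK1 : ∀ s : ℝ, 0 ≤ 4 * (w s) ^ 2 - (deriv w s) ^ 2) :
    ∀ s : ℝ, 0 < 4 * (w s) ^ 2 - (deriv w s) ^ 2 := by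
  have hn3 : (3 : ℝ) ≤ n := by exact_mod_cast hn
  have hm0 : 0 < m := by rw [hm]; apply div_pos <;> linarith
  have hw : Differentiable ℝ w := hsmooth.differentiable (by simp)
  have hw' : Differentiable ℝ (deriv w) :=
    (contDiff_infty_iff_deriv.1 hsmooth).2.differentiable (by simp)
  intro s₀
  refine (hK1 s₀).lt_of_ne fun hzero => ?_
  have hmin : IsLocalMin (fun s => 4 * w s ^ 2 - deriv w s ^ 2) s₀ :=
    Filter.Eventually.of_forall fun s => hzero.symm.trans_le (hK1 s)
  have h1 : deriv w s₀ = 2 * w s₀ :=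
    eq_two_mul_of_four_mul_sq_sub_sq_eq_zero (hpos s₀).le (hmono s₀).le hzero.symm
  have h2 : deriv (deriv w) s₀ = 4 * w s₀ :=
    deriv_deriv_eq_four_mul_of_isLocalMin (hw s₀) (hw' s₀) (hmono s₀).ne' hmin
  have hcube : (2 * θ / m + ρ / ((n : ℝ) - 1)) * w s₀ ^ 3 = 0 := by
    have := hode s₀
    rw [h1, h2] at this
    linear_combination this
  have hcoeff := two_mul_div_add_div_sub_one_pos (by linarith) hm0 hθ hρ hθρ
  exact (mul_pos hcoeff (pow_pos (hpos s₀) 3)).ne' hcube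
end
end
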